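/- Let n ≥ t ≥ 2 be integers, let p1, …, pt ∈ ℤ^n be linearly independent vectors with all entries positive, let r ∈ ℤ^n, let M1 > M2 > ⋯ > Mt be positive integers, and set a = M1·p1 + ⋯ + Mt·pt + r. Let A be the (n+1)×n integer matrix with first row a and remaining rows the identity matrix, let P be the t×n matrix with rows p1,…,pt, and let α_k = Λ_k(N(P)) denote the k-th successive minimum of the kernel lattice N(P) = {x ∈ ℤ^n : P·x = 0}. Set ρ = max{‖p1‖, …, ‖pt‖, ‖r‖ + 1}. Let c_n ≥ 1 be a real number and let U be an n×n integer matrix with determinant ±1 such that the columns ã_1, …, ã_n of Ã = A·U satisfy max{‖ã_1‖, …, ‖ã_ℓ‖} ≤ c_n·Λ_ℓ(L(A)) for every ℓ = 1,…,n, where L(A) = {A·x : x ∈ ℤ^n}. Suppose s1, …, st are integers with 1 ≤ s_t ≤ s_{t−1} ≤ ⋯ ≤ s_1 ≤ n − t, and suppose that for each i = 1,…,t, M_i > c_n · α_{s_i} · ρ² · (M_{i+1} + ⋯ + M_t + 1). Then for each i = 1,…,t, the first s_i entries of the row vector p_i·U are all zero. -/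

import Mathlib

open Finset

/-- Euclidean norm of an integer vector. -/
noncomputable def intEnorm {m : ℕ} (v : Fin m → ℤ) : ℝ :=
  Real.sqrt (∑ i, ((v i : ℝ)) ^ 2)

/-- The `k`-th successive minimum of a set (lattice) of integer vectors. -/
noncomputable def succMin {m : ℕ} (L : Set (Fin m → ℤ)) (k : ℕ) : ℝ :=
  sInf {s : ℝ | ∃ w : Fin k → (Fin m → ℤ),
    (∀ j, w j ∈ L) ∧ LinearIndependent ℤ w ∧ ∀ j, intEnorm (w j) ≤ s}

lemma intEnorm_nonneg {m : ℕ} (v : Fin m → ℤ) : 0 ≤ intEnorm v := Real.sqrt_nonneg _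

lemma abs_apply_le_enorm {m : ℕ} (v : Fin m → ℤ) (i : Fin m) : |(v i : ℝ)| ≤ intEnorm v := by
  rw [← Real.sqrt_sq_eq_abs]
  exact Real.sqrt_le_sqrt (Finset.single_le_sum (f := fun i => ((v i : ℝ))^2)
    (fun _ _ => sq_nonneg _) (mem_univ i))

lemma abs_dot_le {m : ℕ} (x y : Fin m → ℤ) :
    |((∑ i, x i * y i : ℤ) : ℝ)| ≤ intEnorm x * intEnorm y := by
  push_cast
  rw [abs_le]
  have h1 := Real.sum_mul_le_sqrt_mul_sqrt univ (fun i => (x i : ℝ)) (fun i => (y i : ℝ))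
  have h2 := Real.sum_mul_le_sqrt_mul_sqrt univ (fun i => -(x i : ℝ)) (fun i => (y i : ℝ))
  have e1 : ∑ i, -(x i : ℝ) * (y i : ℝ) = -∑ i, (x i : ℝ) * (y i : ℝ) := by
    rw [← Finset.sum_neg_distrib]; exact Finset.sum_congr rfl fun i _ => by ring
  have e2 : ∑ i, (-(x i : ℝ)) ^ 2 = ∑ i, ((x i : ℝ)) ^ 2 :=
    Finset.sum_congr rfl fun i _ => by ring
  rw [e1, e2] at h2
  unfold intEnorm
  constructor <;> linarith

noncomputable def castLM (n : ℕ) : (Fin n → ℤ) →ₗ[ℤ] (Fin n → ℚ) where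
  toFun x := fun m => (x m : ℚ)
  map_add' x y := by funext m; simp [Pi.add_apply]
  map_smul' c x := by
    funext m
    simp [Pi.smul_apply, smul_eq_mul, zsmul_eq_mul]

lemma exists_kernel_family (n t k : ℕ) (htn : t ≤ n) (hk : k ≤ n - t)
    (p : Fin t → Fin n → ℤ) :
    ∃ w : Fin k → Fin n → ℤ, (∀ j, ∀ i : Fin t, ∑ m, p i m * w j m = 0) ∧
      LinearIndependent ℤ w := by
  classical
  set Pq : Matrix (Fin t) (Fin n) ℚ := fun i m => (p i m : ℚ) with hPq
  set f : (Fin n → ℚ) →ₗ[ℚ] (Fin t → ℚ) := Pq.mulVecLin with hf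
  have hker : k ≤ Module.finrank ℚ (LinearMap.ker f) := by
    have h1 := LinearMap.finrank_range_add_finrank_ker f
    have h2 : Module.finrank ℚ (LinearMap.range f) ≤ Module.finrank ℚ (Fin t → ℚ) :=
      Submodule.finrank_le _
    have h3 : Module.finrank ℚ (Fin t → ℚ) = t := Module.finrank_fin_fun ℚ
    have h4 : Module.finrank ℚ (Fin n → ℚ) = n := Module.finrank_fin_fun ℚ
    omega
  let b := Module.finBasis ℚ (LinearMap.ker f)
  let v : Fin k → (Fin n → ℚ) := fun j => (b (Fin.castLE hker j) : Fin n → ℚ)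
  have hvker : ∀ j, f (v j) = 0 := fun j => (b (Fin.castLE hker j)).2
  have hvli : LinearIndependent ℚ v := by
    have h1 : LinearIndependent ℚ (fun j : Fin k => b (Fin.castLE hker j)) :=
      b.linearIndependent.comp _ (Fin.castLE_injective hker)
    exact h1.map' (LinearMap.ker f).subtype (Submodule.ker_subtype _)
  -- clear denominators
  let d : Fin k → ℕ := fun j => ∏ m, (v j m).den
  have hdpos : ∀ j, 0 < d j := fun j => Finset.prod_pos fun m _ => (v j m).pos
  let w : Fin k → Fin n → ℤ := fun j m => ((d j / (v j m).den : ℕ) : ℤ) * (v j m).num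
  have hcast : ∀ j m, ((w j m : ℚ)) = (d j : ℚ) * v j m := by
    intro j m
    have hdvd : (v j m).den ∣ d j := Finset.dvd_prod_of_mem _ (mem_univ m)
    have hne : ((v j m).den : ℚ) ≠ 0 := by
      exact_mod_cast (v j m).den_ne_zero
    show ((((d j / (v j m).den : ℕ) : ℤ) * (v j m).num : ℤ) : ℚ) = _
    rw [Int.cast_mul, Int.cast_natCast, Nat.cast_div hdvd hne,
      div_mul_eq_mul_div, mul_div_assoc, Rat.num_div_den]
  -- kernel membership over ℤ
  have hwker : ∀ j, ∀ i : Fin t, ∑ m, p i m * w j m = 0 := by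
    intro j i
    have h0 : (Pq.mulVec (v j)) i = 0 := by
      have := hvker j
      rw [hf] at this
      simpa [Matrix.mulVecLin_apply] using congrFun this i
    have h0' : ∑ m, (p i m : ℚ) * v j m = 0 := by
      simpa [Matrix.mulVec, dotProduct, hPq] using h0
    have : ((∑ m, p i m * w j m : ℤ) : ℚ) = 0 := by
      push_cast
      calc ∑ m, (p i m : ℚ) * (w j m : ℚ) = ∑ m, (d j : ℚ) * ((p i m : ℚ) * v j m) := by
            refine Finset.sum_congr rfl fun m _ => ?_
            rw [hcast j m]; ring
        _ = (d j : ℚ) * ∑ m, (p i m : ℚ) * v j m := by rw [Finset.mul_sum]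
        _ = 0 := by rw [h0', mul_zero]
    exact_mod_cast this
  -- linear independence over ℤ
  have hwq : (fun j => (castLM n) (w j)) = fun j => (d j : ℚ) • v j := by
    funext j m
    simpa [castLM] using hcast j m
  have hli2 : LinearIndependent ℚ (fun j => (d j : ℚ) • v j) := by
    have := hvli.units_smul (fun j => Units.mk0 ((d j : ℚ))
      (by exact_mod_cast (hdpos j).ne'))
    exact this
  have hli3 : LinearIndependent ℤ (fun j => (castLM n) (w j)) := by
    rw [hwq]
    exact hli2.restrict_scalars (by
      intro x y h
      simpa using h)
  exact ⟨w, hwker, hli3.of_comp (castLM n)⟩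


lemma lambda_le (n t : ℕ) (htn : t ≤ n)
    (p : Fin t → Fin n → ℤ) (r : Fin n → ℤ) (M : Fin t → ℤ)
    (a : Fin n → ℤ) (ha : a = fun j => (∑ i, M i * p i j) + r j)
    (A : Matrix (Fin (n + 1)) (Fin n) ℤ)
    (hA0 : ∀ j, A 0 j = a j)
    (hAsucc : ∀ i : Fin n, ∀ j, A i.succ j = if i = j then 1 else 0)
    (ρ : ℝ) (hρr : intEnorm r + 1 ≤ ρ)
    (k : ℕ) (hk1 : 1 ≤ k) (hk : k ≤ n - t) :
    succMin {y : Fin (n + 1) → ℤ | ∃ x : Fin n → ℤ, y = A.mulVec x} k ≤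
      ρ * succMin {x : Fin n → ℤ | ∀ i : Fin t, ∑ m, p i m * x m = 0} k := by
  classical
  have hρ0 : 0 < ρ := lt_of_lt_of_le (by have := intEnorm_nonneg r; linarith) hρr
  set Sset : Set ℝ := {s : ℝ | ∃ w : Fin k → (Fin n → ℤ),
    (∀ j, w j ∈ {x : Fin n → ℤ | ∀ i : Fin t, ∑ m, p i m * x m = 0}) ∧
    LinearIndependent ℤ w ∧ ∀ j, intEnorm (w j) ≤ s} with hSset
  set Tset : Set ℝ := {s : ℝ | ∃ w : Fin k → (Fin (n+1) → ℤ),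
    (∀ j, w j ∈ {y : Fin (n + 1) → ℤ | ∃ x : Fin n → ℤ, y = A.mulVec x}) ∧
    LinearIndependent ℤ w ∧ ∀ j, intEnorm (w j) ≤ s} with hTset
  -- mulVec formulas
  have hmv : ∀ x : Fin n → ℤ, ∀ i, (A.mulVec x) i = ∑ m, A i m * x m := by
    intro x i; simp [Matrix.mulVec, dotProduct]
  have hmv0 : ∀ x : Fin n → ℤ, (∀ i : Fin t, ∑ m, p i m * x m = 0) →
      (A.mulVec x) 0 = ∑ m, r m * x m := by
    intro x hx
    rw [hmv]
    have : ∀ m, A 0 m * x m = (∑ i, M i * p i m) * x m + r m * x m := by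
      intro m; rw [hA0, ha]; ring
    rw [Finset.sum_congr rfl fun m _ => this m, Finset.sum_add_distrib]
    have h2 : ∑ m, (∑ i, M i * p i m) * x m = ∑ i, M i * ∑ m, p i m * x m :=
      calc ∑ m, (∑ i, M i * p i m) * x m
          = ∑ m, ∑ i, M i * (p i m * x m) := Finset.sum_congr rfl fun m _ => by
            rw [Finset.sum_mul]; exact Finset.sum_congr rfl fun i _ => by ring
        _ = ∑ i, ∑ m, M i * (p i m * x m) := Finset.sum_comm
        _ = ∑ i, M i * ∑ m, p i m * x m := Finset.sum_congr rfl fun i _ =>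
            (Finset.mul_sum _ _ _).symm
    rw [h2, Finset.sum_congr rfl fun i _ => by rw [hx i, mul_zero]]
    simp
  have hmvs : ∀ x : Fin n → ℤ, ∀ i : Fin n, (A.mulVec x) i.succ = x i := by
    intro x i
    rw [hmv]
    rw [Finset.sum_congr rfl fun m _ => by rw [hAsucc i m]]
    simp
  -- norm bound for kernel vectors
  have hnb : ∀ x : Fin n → ℤ, (∀ i : Fin t, ∑ m, p i m * x m = 0) →
      intEnorm (A.mulVec x) ≤ ρ * intEnorm x := by
    intro x hx
    have hsum : ∑ i, ((A.mulVec x) i : ℝ) ^ 2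
        = ((∑ m, r m * x m : ℤ) : ℝ) ^ 2 + ∑ i : Fin n, ((x i : ℝ)) ^ 2 := by
      rw [Fin.sum_univ_succ]
      rw [hmv0 x hx]
      congr 1
      exact Finset.sum_congr rfl fun i _ => by rw [hmvs x i]
    have hcs := abs_dot_le r x
    have hx2 : ∑ i : Fin n, ((x i : ℝ)) ^ 2 = (intEnorm x) ^ 2 := by
      rw [intEnorm, Real.sq_sqrt]
      exact Finset.sum_nonneg fun i _ => sq_nonneg _
    have hEx := intEnorm_nonneg x
    have hEr := intEnorm_nonneg r
    have h1 : ((∑ m, r m * x m : ℤ) : ℝ) ^ 2 ≤ (intEnorm r * intEnorm x) ^ 2 := by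
      rw [← sq_abs]
      exact pow_le_pow_left₀ (abs_nonneg _) hcs 2
    have : intEnorm (A.mulVec x) ≤ Real.sqrt ((ρ * intEnorm x) ^ 2) := by
      rw [intEnorm, hsum]
      apply Real.sqrt_le_sqrt
      rw [hx2]
      have h2 : (intEnorm r + 1) ^ 2 ≤ ρ ^ 2 := pow_le_pow_left₀ (by positivity) hρr 2
      nlinarith [mul_le_mul_of_nonneg_right h2 (sq_nonneg (intEnorm x)),
        mul_nonneg hEr (sq_nonneg (intEnorm x))]
    rwa [Real.sqrt_sq (by positivity)] at this
  -- S nonempty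
  obtain ⟨w0, hw0k, hw0li⟩ := exists_kernel_family n t k htn hk p
  have hSne : Sset.Nonempty := by
    refine ⟨∑ j, intEnorm (w0 j), w0, fun j => hw0k j, hw0li, fun j => ?_⟩
    exact Finset.single_le_sum (f := fun j => intEnorm (w0 j))
      (fun j _ => intEnorm_nonneg _) (mem_univ j)
  have hTbdd : BddBelow Tset := by
    refine ⟨0, fun b hb => ?_⟩
    obtain ⟨w, _, _, h3⟩ := hb
    exact le_trans (intEnorm_nonneg (w ⟨0, hk1⟩)) (h3 ⟨0, hk1⟩)
  -- injectivity of mulVec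
  have hker : LinearMap.ker A.mulVecLin = ⊥ := by
    rw [LinearMap.ker_eq_bot']
    intro x hx
    funext i
    have := congrFun (show A.mulVec x = 0 from hx) i.succ
    rw [hmvs x i] at this
    simpa using this
  have key : ∀ s0 ∈ Sset, succMin {y : Fin (n + 1) → ℤ | ∃ x, y = A.mulVec x} k ≤ ρ * s0 := by
    intro s0 hs0
    obtain ⟨w, hw1, hw2, hw3⟩ := hs0
    apply csInf_le hTbdd
    refine ⟨fun j => A.mulVec (w j), fun j => ⟨w j, rfl⟩, ?_, fun j => ?_⟩
    · have := hw2.map' A.mulVecLin hker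
      exact this
    · calc intEnorm (A.mulVec (w j)) ≤ ρ * intEnorm (w j) := hnb (w j) (hw1 j)
        _ ≤ ρ * s0 := by
            have := hw3 j
            nlinarith [intEnorm_nonneg (w j)]
  rw [succMin, mul_comm, ← div_le_iff₀ hρ0]
  apply le_csInf hSne
  intro s0 hs0
  rw [div_le_iff₀ hρ0, mul_comm]
  exact key s0 hs0

lemma adot_decomp {n t : ℕ} (p : Fin t → Fin n → ℤ) (r : Fin n → ℤ) (M : Fin t → ℤ)
    (x : Fin n → ℤ) :
    ∑ m, ((∑ i, M i * p i m) + r m) * x m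
      = ∑ i, M i * (∑ m, p i m * x m) + ∑ m, r m * x m := by
  have h1 : ∀ m : Fin n, ((∑ i, M i * p i m) + r m) * x m
      = (∑ i, M i * (p i m * x m)) + r m * x m := by
    intro m
    rw [add_mul, Finset.sum_mul]
    congr 1
    exact Finset.sum_congr rfl fun i _ => by ring
  rw [Finset.sum_congr rfl fun m _ => h1 m, Finset.sum_add_distrib]
  congr 1
  rw [Finset.sum_comm]
  exact Finset.sum_congr rfl fun i _ => (Finset.mul_sum _ _ _).symm

theorem cbr_zeroes_cascade_directions (n t : ℕ) (ht2 : 2 ≤ t) (htn : t ≤ n)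
    (p : Fin t → Fin n → ℤ)
    (hppos : ∀ i j, 0 < p i j)
    (hpli : LinearIndependent ℤ p)
    (r : Fin n → ℤ)
    (M : Fin t → ℤ) (hMpos : ∀ i, 0 < M i)
    (hMdec : ∀ i j : Fin t, i < j → M j < M i)
    (a : Fin n → ℤ) (ha : a = fun j => (∑ i, M i * p i j) + r j)
    (A : Matrix (Fin (n + 1)) (Fin n) ℤ)
    (hA0 : ∀ j, A 0 j = a j)
    (hAsucc : ∀ i : Fin n, ∀ j, A i.succ j = if i = j then 1 else 0)
    (α : ℕ → ℝ)
    (hα : ∀ k, α k = succMin {x : Fin n → ℤ | ∀ i : Fin t, ∑ m, p i m * x m = 0} k)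
    (ρ : ℝ) (hρ : ρ = max (⨆ i : Fin t, intEnorm (p i)) (intEnorm r + 1))
    (c : ℝ) (hc : 1 ≤ c)
    (U : Matrix (Fin n) (Fin n) ℤ) (hU : U.det = 1 ∨ U.det = -1)
    (hred : ∀ ℓ : ℕ, 1 ≤ ℓ → ℓ ≤ n → ∀ j : Fin n, (j : ℕ) < ℓ →
      intEnorm (fun i => (A * U) i j) ≤
        c * succMin {y : Fin (n + 1) → ℤ | ∃ x : Fin n → ℤ, y = A.mulVec x} ℓ)
    (s : Fin t → ℕ)
    (hs1 : ∀ i, 1 ≤ s i) (hsle : ∀ i, s i ≤ n - t)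
    (hsanti : ∀ i j : Fin t, i ≤ j → s j ≤ s i)
    (hM : ∀ i : Fin t,
      c * α (s i) * ρ ^ 2 * ((∑ j ∈ Finset.univ.filter (fun j => i < j), (M j : ℝ)) + 1)
        < (M i : ℝ)) :
    ∀ i : Fin t, ∀ j : Fin n, (j : ℕ) < s i → ∑ m, p i m * U m j = 0 := by
  classical
  have hρ1 : (1:ℝ) ≤ ρ := by
    rw [hρ]
    have := intEnorm_nonneg r
    have := le_max_right (⨆ i : Fin t, intEnorm (p i)) (intEnorm r + 1)
    linarith
  have hρr : intEnorm r + 1 ≤ ρ := by rw [hρ]; exact le_max_right _ _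
  have hpρ : ∀ i' : Fin t, intEnorm (p i') ≤ ρ := by
    intro i'
    rw [hρ]
    refine le_trans ?_ (le_max_left _ _)
    exact le_ciSup (Set.Finite.bddAbove (Set.finite_range fun i'' => intEnorm (p i''))) i'
  have H : ∀ N : ℕ, ∀ i : Fin t, (i : ℕ) = N → ∀ j : Fin n, (j : ℕ) < s i →
      ∑ m, p i m * U m j = 0 := by
    intro N
    induction N using Nat.strong_induction_on with
    | _ N IH =>
      intro i hiN j hj
      by_contra hne
      have hIH0 : ∀ i' : Fin t, i' < i → ∑ m, p i' m * U m j = 0 := by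
        intro i' hi'
        have hlt : (i' : ℕ) < N := by rw [← hiN]; exact hi'
        exact IH (i' : ℕ) hlt i' rfl j
          (lt_of_lt_of_le hj (hsanti i' i (le_of_lt hi')))
      set k := s i with hk
      have hkn : k ≤ n := le_trans (hsle i) (Nat.sub_le n t)
      have hcol := hred k (hs1 i) hkn j hj
      have hΛ := lambda_le n t htn p r M a ha A hA0 hAsucc ρ hρr k (hs1 i) (hsle i)
      set αk : ℝ := succMin {x : Fin n → ℤ | ∀ i : Fin t, ∑ m, p i m * x m = 0} k with hαk
      have hαnn : 0 ≤ αk := by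
        apply Real.sInf_nonneg
        rintro x ⟨w, _, _, h3⟩
        exact le_trans (intEnorm_nonneg (w ⟨0, hs1 i⟩)) (h3 ⟨0, hs1 i⟩)
      set E : ℝ := intEnorm (fun i2 => (A * U) i2 j) with hE
      set K : ℝ := c * (ρ * αk) with hK
      have hEK : E ≤ K := le_trans hcol (by
        rw [hK]
        exact mul_le_mul_of_nonneg_left hΛ (by linarith))
      -- column entries
      have hcol0 : (A * U) 0 j = ∑ m, a m * U m j := by
        rw [Matrix.mul_apply]
        exact Finset.sum_congr rfl fun m _ => by rw [hA0]
      have hcolsucc : ∀ i2 : Fin n, (A * U) i2.succ j = U i2 j := by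
        intro i2
        rw [Matrix.mul_apply]
        rw [Finset.sum_congr rfl fun m _ => by rw [hAsucc i2 m]]
        simp
      set Nu : ℝ := intEnorm (fun m => U m j) with hNu
      have hNu0 : 0 ≤ Nu := intEnorm_nonneg _
      have hNuE : Nu ≤ E := by
        rw [hNu, hE, intEnorm, intEnorm]
        apply Real.sqrt_le_sqrt
        rw [Fin.sum_univ_succ]
        have he : ∑ i2 : Fin n, (((A * U) i2.succ j : ℝ)) ^ 2
            = ∑ i2 : Fin n, ((U i2 j : ℝ)) ^ 2 :=
          Finset.sum_congr rfl fun i2 _ => by rw [hcolsucc i2]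
        rw [he]
        have := sq_nonneg (((A * U) 0 j : ℝ))
        linarith
      have habs0 : |((∑ m, a m * U m j : ℤ) : ℝ)| ≤ E := by
        have h := abs_apply_le_enorm (fun i2 => (A * U) i2 j) 0
        rw [hcol0] at h
        exact h
      -- decompose a·u
      have hadot : ∑ m, a m * U m j
          = ∑ i', M i' * (∑ m, p i' m * U m j) + ∑ m, r m * U m j := by
        calc ∑ m, a m * U m j = ∑ m, ((∑ i', M i' * p i' m) + r m) * U m j :=
              Finset.sum_congr rfl fun m _ => by rw [ha]
          _ = _ := adot_decomp p r M (fun m => U m j)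
      -- split the i'-sum
      set dint : Fin t → ℤ := fun i' => ∑ m, p i' m * U m j with hdint
      have hsplit : ∑ i', M i' * dint i'
          = (∑ i' ∈ univ.filter (fun i' => i < i'), M i' * dint i') + M i * dint i := by
        rw [← Finset.sum_filter_add_sum_filter_not univ (fun i' => i < i')
          (fun i' => M i' * dint i')]
        congr 1
        rw [Finset.sum_eq_single i]
        · intro b hb hbne
          simp only [Finset.mem_filter, Finset.mem_univ, true_and, not_lt] at hb
          rw [show dint b = 0 from hIH0 b (lt_of_le_of_ne hb hbne), mul_zero]
        · intro h
          exact absurd (Finset.mem_filter.mpr ⟨mem_univ i, not_lt.mpr le_rfl⟩) h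
      -- real bounds
      have hd1 : (1:ℝ) ≤ |((dint i : ℤ) : ℝ)| := by
        have : (1:ℤ) ≤ |dint i| := Int.one_le_abs hne
        calc (1:ℝ) = ((1:ℤ):ℝ) := by norm_num
          _ ≤ (|dint i| : ℝ) := by exact_mod_cast this
          _ = |((dint i : ℤ):ℝ)| := by push_cast; ring
      have hMi0 : (0:ℝ) ≤ (M i : ℝ) := by exact_mod_cast (hMpos i).le
      -- bound each high term
      have hterm : ∀ i' ∈ univ.filter (fun i' => i < i'),
          |((M i' * dint i' : ℤ) : ℝ)| ≤ (M i' : ℝ) * (ρ * Nu) := by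
        intro i' _
        have h1 : |((dint i' : ℤ) : ℝ)| ≤ intEnorm (p i') * Nu := abs_dot_le (p i') _
        have h2 : intEnorm (p i') * Nu ≤ ρ * Nu :=
          mul_le_mul_of_nonneg_right (hpρ i') hNu0
        have h3 : (0:ℝ) ≤ (M i' : ℝ) := by exact_mod_cast (hMpos i').le
        calc |((M i' * dint i' : ℤ) : ℝ)| = (M i' : ℝ) * |((dint i' : ℤ) : ℝ)| := by
              push_cast [abs_mul]
              rw [abs_of_nonneg h3]
          _ ≤ (M i' : ℝ) * (ρ * Nu) := mul_le_mul_of_nonneg_left (le_trans h1 h2) h3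
      set Sf : ℝ := ∑ i' ∈ univ.filter (fun i' => i < i'), (M i' : ℝ) with hSfdef
      have hSf0 : 0 ≤ Sf := Finset.sum_nonneg fun i' _ => by
        exact_mod_cast (hMpos i').le
      have hSf : |((∑ i' ∈ univ.filter (fun i' => i < i'), M i' * dint i' : ℤ) : ℝ)|
          ≤ Sf * (ρ * Nu) := by
        rw [hSfdef, Finset.sum_mul]
        calc |((∑ i' ∈ univ.filter (fun i' => i < i'), M i' * dint i' : ℤ) : ℝ)|
            = |∑ i' ∈ univ.filter (fun i' => i < i'), ((M i' * dint i' : ℤ) : ℝ)| := by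
              push_cast; ring_nf
          _ ≤ ∑ i' ∈ univ.filter (fun i' => i < i'), |((M i' * dint i' : ℤ) : ℝ)| :=
              Finset.abs_sum_le_sum_abs _ _
          _ ≤ ∑ i' ∈ univ.filter (fun i' => i < i'), (M i' : ℝ) * (ρ * Nu) :=
              Finset.sum_le_sum hterm
      have hru : |((∑ m, r m * U m j : ℤ) : ℝ)| ≤ (ρ - 1) * Nu := by
        have h1 := abs_dot_le r (fun m => U m j)
        have h2 : intEnorm r * Nu ≤ (ρ - 1) * Nu :=
          mul_le_mul_of_nonneg_right (by linarith) hNu0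
        exact le_trans h1 h2
      -- main chain
      have hMidi : ((M i : ℤ) : ℝ) * ((dint i : ℤ) : ℝ)
          = ((∑ m, a m * U m j : ℤ) : ℝ)
            - ((∑ i' ∈ univ.filter (fun i' => i < i'), M i' * dint i' : ℤ) : ℝ)
            - ((∑ m, r m * U m j : ℤ) : ℝ) := by
        have : (M i * dint i : ℤ) = (∑ m, a m * U m j)
            - (∑ i' ∈ univ.filter (fun i' => i < i'), M i' * dint i')
            - (∑ m, r m * U m j) := by
          rw [hadot, hsplit]; ring
        calc ((M i : ℤ) : ℝ) * ((dint i : ℤ) : ℝ) = ((M i * dint i : ℤ) : ℝ) := by push_cast; ring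
          _ = _ := by rw [this]; push_cast; ring
      have hf1 : (M i : ℝ) ≤ |((∑ m, a m * U m j : ℤ) : ℝ)|
          + |((∑ i' ∈ univ.filter (fun i' => i < i'), M i' * dint i' : ℤ) : ℝ)|
          + |((∑ m, r m * U m j : ℤ) : ℝ)| := by
        have h1 : (M i : ℝ) ≤ |((M i : ℤ) : ℝ) * ((dint i : ℤ) : ℝ)| := by
          rw [abs_mul, abs_of_nonneg hMi0]
          nlinarith
        rw [hMidi] at h1
        calc (M i : ℝ) ≤ |_ - _ - _| := h1
          _ ≤ _ := by
            refine le_trans (abs_sub _ _) ?_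
            have := abs_sub ((∑ m, a m * U m j : ℤ) : ℝ)
              ((∑ i' ∈ univ.filter (fun i' => i < i'), M i' * dint i' : ℤ) : ℝ)
            linarith
      -- final contradiction
      have hK0 : 0 ≤ K := by
        rw [hK]; positivity
      have g1 : Sf * (ρ * Nu) ≤ Sf * (ρ * K) := by
        apply mul_le_mul_of_nonneg_left _ hSf0
        exact mul_le_mul_of_nonneg_left (le_trans hNuE hEK) (by linarith)
      have g2 : (ρ - 1) * Nu ≤ (ρ - 1) * K :=
        mul_le_mul_of_nonneg_left (le_trans hNuE hEK) (by linarith)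
      have g3 : K + Sf * (ρ * K) + (ρ - 1) * K = c * αk * ρ ^ 2 * (Sf + 1) := by
        rw [hK]; ring
      have hMfin := hM i
      rw [hα, ← hk, ← hαk, ← hSfdef] at hMfin
      have habs0' : |((∑ m, a m * U m j : ℤ) : ℝ)| ≤ K := le_trans habs0 hEK
      linarith
  exact fun i j hj => H (i : ℕ) i rfl j hj
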